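/- arXiv:1309.4237 — 7 statements merged into one kernel-verified Lean document; each statement's English description precedes it below -/
import Mathlib

section
/- For all n ≥ k ≥ 0, the Jacobi-Stirling number of the second kind satisfies JS(n,k;z) = h_{n-k}(1(1+z), 2(2+z), ..., k(k+z)), where h_j denotes the complete homogeneous symmetric polynomial of degree j. -/
/-!
Write `x_i = i(i+z)`. Splitting the multisets of size `j+1` drawn from `{1, …, k+1}` according
to whether they contain `k+1` gives
`h_{j+1}(x_1, …, x_{k+1}) = h_{j+1}(x_1, …, x_k) + x_{k+1} h_j(x_1, …, x_{k+1})`,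
which is the Jacobi–Stirling recurrence for `JS(k+j+1, k+1; z)`; since `JS(k, k+1; z) = 0`, both
sides also agree at `j = 0`, and a double induction on `k` and `j` finishes.
-/

open Polynomial Finset

/-- The Jacobi-Stirling numbers of the second kind `JS(n,k;z)`, as polynomials in `z`. -/
noncomputable def JS : ℕ → ℕ → Polynomial ℤ
  | 0, 0 => 1
  | 0, _+1 => 0
  | _+1, 0 => 0
  | n+1, k+1 => JS n k + (C ((k : ℤ) + 1) * (C ((k : ℤ) + 1) + X)) * JS n (k+1)

namespace Finset

variable {α : Type*} [DecidableEq α] {s t : Finset α} {a : α} {n : ℕ}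

theorem filter_mem_sym_succ (ha : a ∈ t) :
    (t.sym (n + 1)).filter (a ∈ ·) = (t.sym n).image (Sym.cons a) := by
  ext m
  simp only [mem_filter, mem_image, mem_sym_iff]
  constructor
  · rintro ⟨hm, ham⟩
    refine ⟨m.erase a ham, fun b hb => hm b ?_, Sym.cons_erase ham⟩
    have hb' : b ∈ (m : Multiset α).erase a := Sym.coe_erase ham ▸ hb
    exact Multiset.mem_of_mem_erase hb'
  · rintro ⟨m, hm, rfl⟩
    refine ⟨fun b hb => ?_, Sym.mem_cons_self a m⟩
    rcases Sym.mem_cons.1 hb with rfl | hb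
    exacts [ha, hm b hb]

theorem filter_not_mem_sym_insert (ha : a ∉ s) :
    ((insert a s).sym n).filter (a ∉ ·) = s.sym n := by
  ext m
  simp only [mem_filter, mem_sym_iff, mem_insert]
  constructor
  · rintro ⟨hm, ham⟩ b hb
    exact (hm b hb).resolve_left (by rintro rfl; exact ham hb)
  · intro hm
    exact ⟨fun b hb => Or.inr (hm b hb), fun has => ha (hm a has)⟩

end Finset

section CompleteHomogeneous

variable {α R : Type*} [DecidableEq α] [CommSemiring R]

def completeHomogeneous (s : Finset α) (f : α → R) (j : ℕ) : R :=
  ∑ m ∈ s.sym j, ((m : Multiset α).map f).prod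

theorem completeHomogeneous_zero (s : Finset α) (f : α → R) :
    completeHomogeneous s f 0 = 1 := by
  rw [completeHomogeneous, sym_zero, sum_singleton]
  exact Multiset.prod_zero

theorem completeHomogeneous_empty_succ (f : α → R) (j : ℕ) :
    completeHomogeneous ∅ f (j + 1) = 0 := by
  rw [completeHomogeneous, sym_empty, sum_empty]

theorem completeHomogeneous_insert_succ {s : Finset α} {a : α} (ha : a ∉ s)
    (f : α → R) (j : ℕ) :
    completeHomogeneous (insert a s) f (j + 1) =
      completeHomogeneous s f (j + 1) + f a * completeHomogeneous (insert a s) f j := by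
  unfold completeHomogeneous
  rw [← sum_filter_not_add_sum_filter _ (a ∈ ·), filter_not_mem_sym_insert ha,
    filter_mem_sym_succ (mem_insert_self a s),
    sum_image fun _ _ _ _ => (Sym.cons_inj_right a _ _).1, mul_sum]
  simp only [Sym.coe_cons, Multiset.map_cons, Multiset.prod_cons]

end CompleteHomogeneous

theorem JS_eq_zero_of_lt : ∀ {n k : ℕ}, n < k → JS n k = 0
  | 0, _ + 1, _ => rfl
  | _ + 1, _ + 1, h => by
    rw [JS, JS_eq_zero_of_lt (by omega), JS_eq_zero_of_lt (by omega), mul_zero, add_zero]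

noncomputable def jacobiWeight (i : ℕ) : ℤ[X] := C (i : ℤ) * (C (i : ℤ) + X)

theorem JS_succ_succ (n k : ℕ) :
    JS (n + 1) (k + 1) = JS n k + jacobiWeight (k + 1) * JS n (k + 1) := by
  rw [JS, jacobiWeight]; push_cast; rfl

theorem JS_add_left (k j : ℕ) : JS (k + j) k = completeHomogeneous (Icc 1 k) jacobiWeight j := by
  induction k generalizing j with
  | zero =>
    cases j with
    | zero => rw [completeHomogeneous_zero]; rfl
    | succ j =>
      rw [Icc_eq_empty_of_lt zero_lt_one, zero_add, completeHomogeneous_empty_succ]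
      rfl
  | succ k ihk =>
    have hIcc : Icc 1 (k + 1) = insert (k + 1) (Icc 1 k) :=
      (insert_Icc_right_eq_Icc_add_one (by omega)).symm
    induction j with
    | zero =>
      have hkk := ihk 0
      rw [add_zero, completeHomogeneous_zero] at hkk
      rw [add_zero, JS_succ_succ, hkk, JS_eq_zero_of_lt k.lt_succ_self, mul_zero, add_zero,
        completeHomogeneous_zero]
    | succ j ihj =>
      rw [hIcc, completeHomogeneous_insert_succ (by simp), ← hIcc, ← ihj, ← ihk,
        show k + 1 + j = k + (j + 1) by omega, ← JS_succ_succ]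
      congr 1
      omega

/-- `JS(n,k;z)` equals the complete homogeneous symmetric polynomial of degree `n-k`
in the variables `1(1+z), 2(2+z), …, k(k+z)`. -/
theorem JS_eq_hsymm (n k : ℕ) (h : k ≤ n) :
    JS n k =
      ∑ m ∈ (Finset.Icc 1 k).sym (n - k),
        (Multiset.map (fun i => C (i : ℤ) * (C (i : ℤ) + X)) (m : Multiset ℕ)).prod := by
  obtain ⟨j, rfl⟩ := Nat.exists_eq_add_of_le h
  rw [Nat.add_sub_cancel_left, JS_add_left]
  refine sum_congr rfl fun m _ => ?_
  -- `i` is used as an integer, so `(m : Multiset ℕ)` elaborates to the monadic lift of `m`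
  -- into `Multiset ℤ`, that is `m.bind fun i => {(i : ℤ)}`.
  show _ = (Multiset.map _ ((m : Multiset ℕ).bind fun i => {(i : ℤ)})).prod
  rw [Multiset.bind_singleton, Multiset.map_map]
  rfl
end

section
/- For every fixed n ≥ 0, the sequence of polynomials {JS(n,k;z-1)}_{k=0}^{n} is strongly z-log-concave: for all 1 ≤ k ≤ l ≤ n, the polynomial JS(n,k;z-1)·JS(n,l;z-1) − JS(n,k-1;z-1)·JS(n,l+1;z-1) has nonnegative coefficients as a polynomial in z. -/
open Polynomial Finset

/-- `JS(n,k;z-1)`: the Jacobi-Stirling number of the second kind with `z` replaced by `z-1`. -/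
noncomputable def JSm (n k : ℕ) : Polynomial ℤ := (JS n k).comp (X - 1)

/-!
Substituting `z ↦ z - 1` turns the recurrence into `a(n+1,k+1) = a(n,k) + c_{k+1} a(n,k+1)` with
weights `c_j = j (j - 1 + z)`. These have nonnegative coefficients, nonnegative increments
`c_{j+1} - c_j = 2j + z`, and `c_{i+1} c_l - c_i c_{l+1} = (l - i)(2il + (i+l-1)z + z²)` is
nonnegative for `i ≤ l`. For any weights with these three properties, relative to any cone closed
under `+` and `*`, the two-row minors `a(n,k+1) a(m,l) - a(n,k) a(m,l+1)` with `k ≤ l`,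
`k + m ≤ l + n` lie in the cone. Expanding the first row by the recurrence writes such a minor as a
cone combination of minors with `n` lowered; on the boundary `k + m = l + n` one expands the second
row instead, which lowers `m` but brings in the weighted minors
`c_l a(n,k+1) a(m,l) - c_{l+1} a(n,k) a(m,l+1)` with `k + m < l + n`; these in turn expand along
the first row into weighted minors and minors with the same `m`. Row log-concavity is the case
`m = n`.
-/

namespace Polynomial

variable (R : Type*) [Semiring R] [PartialOrder R] [IsOrderedRing R]

def nonnegCoeffs : Subsemiring R[X] where
  carrier := {p | ∀ i, 0 ≤ p.coeff i}
  zero_mem' i := by simp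
  one_mem' i := by rw [coeff_one]; split_ifs <;> simp
  add_mem' hp hq i := by rw [coeff_add]; exact add_nonneg (hp i) (hq i)
  mul_mem' hp hq i := by
    rw [coeff_mul]; exact sum_nonneg fun _ _ => mul_nonneg (hp _) (hq _)

variable {R}

theorem mem_nonnegCoeffs {p : R[X]} : p ∈ nonnegCoeffs R ↔ ∀ i, 0 ≤ p.coeff i := Iff.rfl

theorem X_mem_nonnegCoeffs : (X : R[X]) ∈ nonnegCoeffs R := fun i => by
  rw [coeff_X]; split_ifs <;> simp

end Polynomial

section Semiring

variable {A : Type*} [Semiring A]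

def stirlingTriangle (c : ℕ → A) : ℕ → ℕ → A
  | 0, 0 => 1
  | 0, _+1 => 0
  | _+1, 0 => 0
  | n+1, k+1 => stirlingTriangle c n k + c (k+1) * stirlingTriangle c n (k+1)

namespace stirlingTriangle

variable (c : ℕ → A)

@[simp] theorem zero_zero : stirlingTriangle c 0 0 = 1 := rfl

@[simp] theorem zero_succ (k : ℕ) : stirlingTriangle c 0 (k+1) = 0 := rfl

@[simp] theorem succ_zero (n : ℕ) : stirlingTriangle c (n+1) 0 = 0 := rfl

theorem succ_succ (n k : ℕ) : stirlingTriangle c (n+1) (k+1) =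
    stirlingTriangle c n k + c (k+1) * stirlingTriangle c n (k+1) := rfl

theorem eq_zero_of_lt : ∀ {n k : ℕ}, n < k → stirlingTriangle c n k = 0
  | 0, _+1, _ => rfl
  | n+1, k+1, h => by
    rw [succ_succ, eq_zero_of_lt (by omega : n < k), eq_zero_of_lt (by omega : n < k + 1)]
    simp

theorem mem {P : Subsemiring A} {c : ℕ → A} (hc : ∀ j, c j ∈ P) :
    ∀ n k, stirlingTriangle c n k ∈ P
  | 0, 0 => P.one_mem
  | 0, _+1 => P.zero_mem
  | _+1, 0 => P.zero_mem
  | n+1, k+1 => P.add_mem (mem hc n k) (P.mul_mem (hc _) (mem hc n (k+1)))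

end stirlingTriangle

theorem map_stirlingTriangle {B : Type*} [Semiring B] (f : A →+* B) (c : ℕ → A) :
    ∀ n k, f (stirlingTriangle c n k) = stirlingTriangle (f ∘ c) n k
  | 0, 0 => f.map_one
  | 0, _+1 => f.map_zero
  | _+1, 0 => f.map_zero
  | n+1, k+1 => by
    simp [stirlingTriangle.succ_succ, map_stirlingTriangle f c n k,
      map_stirlingTriangle f c n (k+1)]

end Semiring

namespace stirlingTriangle

variable {A : Type*} [CommRing A] (c : ℕ → A)

def minor (n m k l : ℕ) : A :=
  stirlingTriangle c n (k+1) * stirlingTriangle c m l -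
    stirlingTriangle c n k * stirlingTriangle c m (l+1)

def weightedMinor (n m k l : ℕ) : A :=
  c l * (stirlingTriangle c n (k+1) * stirlingTriangle c m l) -
    c (l+1) * (stirlingTriangle c n k * stirlingTriangle c m (l+1))

theorem minor_self (n k : ℕ) : minor c n n k k = 0 := by
  rw [minor]; ring

theorem minor_zero_left {m l : ℕ} (h : m ≤ l) (k : ℕ) : minor c 0 m k l = 0 := by
  cases k <;> simp [minor, eq_zero_of_lt c (Nat.lt_succ_of_le h)]

theorem weightedMinor_zero_left {m l : ℕ} (h : m ≤ l) (k : ℕ) :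
    weightedMinor c 0 m k l = 0 := by
  cases k <;> simp [weightedMinor, eq_zero_of_lt c (Nat.lt_succ_of_le h)]

theorem minor_succ_zero (n m l : ℕ) :
    minor c (n+1) m 0 l = stirlingTriangle c (n+1) 1 * stirlingTriangle c m l := by
  simp [minor]

theorem weightedMinor_succ_zero (n m l : ℕ) :
    weightedMinor c (n+1) m 0 l =
      c l * (stirlingTriangle c (n+1) 1 * stirlingTriangle c m l) := by
  simp [weightedMinor]

theorem minor_succ_right_succ (n m k l : ℕ) :
    minor c n (m+1) k (l+1) = minor c n m k l + weightedMinor c n m k (l+1) := by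
  simp only [minor, weightedMinor, succ_succ]; ring

theorem minor_succ_left_succ (n m j l : ℕ) :
    minor c (n+1) m (j+1) l = minor c n m j l + c (j+1) * minor c n m (j+1) l +
      (c (j+2) - c (j+1)) * (stirlingTriangle c n (j+2) * stirlingTriangle c m l) := by
  simp only [minor, succ_succ]; ring

theorem weightedMinor_succ_left_succ (n m j l : ℕ) :
    weightedMinor c (n+1) m (j+1) l = weightedMinor c n m j l +
      c (j+2) * c l * minor c n m (j+1) l +
      (c (j+2) * c l - c (j+1) * c (l+1)) *
        (stirlingTriangle c n (j+1) * stirlingTriangle c m (l+1)) := by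
  simp only [minor, weightedMinor, succ_succ]; ring

variable {P : Subsemiring A} {c}

theorem weightedMinor_mem_of_minor_mem (hc : ∀ j, c j ∈ P)
    (hc_minor : ∀ i l, i ≤ l → c (i+1) * c l - c i * c (l+1) ∈ P) {m : ℕ}
    (hM : ∀ n k l, k ≤ l → k + m ≤ l + n → minor c n m k l ∈ P) :
    ∀ n k l, k ≤ l → k + m < l + n → weightedMinor c n m k l ∈ P
  | 0, k, l, _, h => by rw [weightedMinor_zero_left c (by omega)]; exact P.zero_mem
  | n+1, 0, l, _, _ => by
    rw [weightedMinor_succ_zero]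
    exact P.mul_mem (hc _) (P.mul_mem (mem hc _ _) (mem hc _ _))
  | n+1, j+1, l, hkl, h => by
    rw [weightedMinor_succ_left_succ]
    refine P.add_mem (P.add_mem ?_ (P.mul_mem (P.mul_mem (hc _) (hc _)) ?_))
      (P.mul_mem (hc_minor _ _ hkl) (P.mul_mem (mem hc _ _) (mem hc _ _)))
    · exact weightedMinor_mem_of_minor_mem hc hc_minor hM n j l (by omega) (by omega)
    · exact hM n (j+1) l (by omega) (by omega)

theorem minor_mem (hc : ∀ j, c j ∈ P) (hc_succ : ∀ j, c (j+1) - c j ∈ P)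
    (hc_minor : ∀ i l, i ≤ l → c (i+1) * c l - c i * c (l+1) ∈ P)
    (n m k l : ℕ) (hkl : k ≤ l) (h : k + m ≤ l + n) : minor c n m k l ∈ P := by
  match n, k with
  | 0, k => rw [minor_zero_left c (by omega)]; exact P.zero_mem
  | n+1, 0 => rw [minor_succ_zero]; exact P.mul_mem (mem hc _ _) (mem hc _ _)
  | n+1, j+1 =>
    rcases h.lt_or_eq with h | h
    · rw [minor_succ_left_succ]
      refine P.add_mem (P.add_mem ?_ (P.mul_mem (hc _) ?_))
        (P.mul_mem (hc_succ _) (P.mul_mem (mem hc _ _) (mem hc _ _)))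
      · exact minor_mem hc hc_succ hc_minor n m j l (by omega) (by omega)
      · exact minor_mem hc hc_succ hc_minor n m (j+1) l (by omega) (by omega)
    · rcases hkl.lt_or_eq with hkl | rfl
      · obtain ⟨m, rfl⟩ : ∃ m', m = m' + 1 := ⟨m - 1, by omega⟩
        obtain ⟨l, rfl⟩ : ∃ l', l = l' + 1 := ⟨l - 1, by omega⟩
        rw [minor_succ_right_succ]
        exact P.add_mem (minor_mem hc hc_succ hc_minor (n+1) m (j+1) l (by omega) (by omega))
          (weightedMinor_mem_of_minor_mem hc hc_minor
            (fun n' k' l' => minor_mem hc hc_succ hc_minor n' m k' l')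
            (n+1) (j+1) (l+1) (by omega) (by omega))
      · obtain rfl : m = n + 1 := by omega
        rw [minor_self]; exact P.zero_mem
termination_by (m, n)

end stirlingTriangle

theorem JS_eq_stirlingTriangle :
    ∀ n k, JS n k = stirlingTriangle (fun j : ℕ => (j : ℤ[X]) * ((j : ℤ[X]) + X)) n k
  | 0, 0 | 0, _+1 | _+1, 0 => by simp [JS]
  | n+1, k+1 => by
    rw [JS, stirlingTriangle.succ_succ, JS_eq_stirlingTriangle n k,
      JS_eq_stirlingTriangle n (k+1)]
    simp

noncomputable def shiftedJSWeight (j : ℕ) : ℤ[X] := (j : ℤ[X]) * ((j : ℤ[X]) - 1 + X)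

theorem JSm_eq_stirlingTriangle (n k : ℕ) :
    JSm n k = stirlingTriangle shiftedJSWeight n k := by
  rw [JSm, ← coe_compRingHom_apply, JS_eq_stirlingTriangle, map_stirlingTriangle]
  congr 1
  funext j
  simp only [Function.comp_apply, coe_compRingHom_apply, mul_comp, add_comp, natCast_comp,
    X_comp, shiftedJSWeight]
  ring

theorem shiftedJSWeight_mem (j : ℕ) : shiftedJSWeight j ∈ nonnegCoeffs ℤ := by
  cases j with
  | zero => simp [shiftedJSWeight]
  | succ i =>
    have e : shiftedJSWeight (i + 1) = ((i + 1 : ℕ) : ℤ[X]) * ((i : ℤ[X]) + X) := by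
      simp only [shiftedJSWeight]; push_cast; ring
    rw [e]
    exact mul_mem (natCast_mem _ _) (add_mem (natCast_mem _ _) X_mem_nonnegCoeffs)

theorem shiftedJSWeight_succ_sub_mem (j : ℕ) :
    shiftedJSWeight (j + 1) - shiftedJSWeight j ∈ nonnegCoeffs ℤ := by
  have e : shiftedJSWeight (j + 1) - shiftedJSWeight j = ((2 * j : ℕ) : ℤ[X]) + X := by
    simp only [shiftedJSWeight]; push_cast; ring
  rw [e]
  exact add_mem (natCast_mem _ _) X_mem_nonnegCoeffs

theorem shiftedJSWeight_minor_mem {i l : ℕ} (h : i ≤ l) :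
    shiftedJSWeight (i + 1) * shiftedJSWeight l - shiftedJSWeight i * shiftedJSWeight (l + 1) ∈
      nonnegCoeffs ℤ := by
  rcases l with _ | l
  · obtain rfl : i = 0 := by omega
    simp [shiftedJSWeight]
  · have e : shiftedJSWeight (i + 1) * shiftedJSWeight (l + 1) -
          shiftedJSWeight i * shiftedJSWeight (l + 1 + 1) =
        ((l + 1 - i : ℕ) : ℤ[X]) *
          (((2 * i * (l + 1) : ℕ) : ℤ[X]) + ((i + l : ℕ) : ℤ[X]) * X + X ^ 2) := by
      simp only [shiftedJSWeight]; push_cast [Nat.cast_sub h]; ring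
    rw [e]
    exact mul_mem (natCast_mem _ _) (add_mem (add_mem (natCast_mem _ _)
      (mul_mem (natCast_mem _ _) X_mem_nonnegCoeffs)) (pow_mem X_mem_nonnegCoeffs 2))

theorem JSm_row_strongly_log_concave_general (n k l : ℕ) (hk : 1 ≤ k) (hkl : k ≤ l)
    (i : ℕ) :
    0 ≤ (JSm n k * JSm n l - JSm n (k - 1) * JSm n (l + 1)).coeff i := by
  obtain ⟨k, rfl⟩ : ∃ k', k = k' + 1 := ⟨k - 1, by omega⟩
  have h := stirlingTriangle.minor_mem shiftedJSWeight_mem shiftedJSWeight_succ_sub_mem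
    (fun _ _ => shiftedJSWeight_minor_mem) n n k l (by omega) (by omega)
  simpa [stirlingTriangle.minor, JSm_eq_stirlingTriangle] using mem_nonnegCoeffs.1 h i

/-- For fixed `n`, the sequence `{JS(n,k;z-1)}_{k=0}^{n}` is strongly `z`-log-concave:
for `1 ≤ k ≤ l ≤ n`, the polynomial `JS(n,k;z-1)·JS(n,l;z-1) − JS(n,k-1;z-1)·JS(n,l+1;z-1)`
has nonnegative coefficients. -/
theorem JSm_row_strongly_log_concave (n k l : ℕ) (hk : 1 ≤ k) (hkl : k ≤ l) (hl : l ≤ n)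
    (i : ℕ) :
    0 ≤ (JSm n k * JSm n l - JSm n (k - 1) * JSm n (l + 1)).coeff i :=
  JSm_row_strongly_log_concave_general n k l hk hkl i
end

section
/- The polynomial sequence {∑_{k=0}^n js(n,k;z) y^k}_{n≥0} is strongly {z,y}-log-convex: for all 1 ≤ m ≤ n, the bivariate polynomial (∏_{i=0}^{m-2}(y+i(z+i)))·(∏_{i=0}^{n}(y+i(z+i))) − (∏_{i=0}^{m-1}(y+i(z+i)))·(∏_{i=0}^{n-1}(y+i(z+i))) has nonnegative coefficients. -/
open Polynomial Finset

/-- `∑_{k=0}^n js(n,k;z) y^k = ∏_{i=0}^{n-1}(y + i(z+i))`, a polynomial in `y`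
with coefficients in `ℤ[z]`. -/
noncomputable def P (n : ℕ) : Polynomial (Polynomial ℤ) :=
  ∏ i ∈ Finset.range n,
    ((X : Polynomial (Polynomial ℤ)) + C (C (i : ℤ) * (Polynomial.X + C (i : ℤ))))

/-!
Since `P (n + 1) = P n · (y + n(z + n))` and `n(z + n) - k(z + k) = (n - k)(z + n + k)`, for
`m = k + 1 ≤ n` the difference `P (m - 1) P (n + 1) - P m P n` factors as
`P k · P n · (n - k)(z + n + k)`. Every factor is the image of a polynomial with coefficients
in `ℕ`, so the difference has nonnegative coefficients.
-/

/-- `P` over an arbitrary commutative semiring: `P n = jsPoly ℤ n` by definition. -/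
noncomputable def jsPoly (R : Type*) [CommSemiring R] (n : ℕ) : R[X][X] :=
  ∏ i ∈ range n, (X + C (C (i : R) * (X + C (i : R))))

section

variable {R : Type*} [CommSemiring R]

theorem jsPoly_succ (n : ℕ) :
    jsPoly R (n + 1) = jsPoly R n * (X + C (C (n : R) * (X + C (n : R)))) :=
  prod_range_succ _ n

theorem map_jsPoly {S : Type*} [CommSemiring S] (f : R →+* S) (n : ℕ) :
    (jsPoly R n).map (mapRingHom f) = jsPoly S n := by
  simp [jsPoly, Polynomial.map_prod]

theorem jsPoly_mul_jsPoly_succ {k n : ℕ} (hkn : k ≤ n) :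
    jsPoly R k * jsPoly R (n + 1) = jsPoly R (k + 1) * jsPoly R n +
      jsPoly R k * jsPoly R n * C (C ((n - k : ℕ) : R) * (X + C ((n + k : ℕ) : R))) := by
  obtain ⟨d, rfl⟩ := Nat.exists_eq_add_of_le hkn
  rw [jsPoly_succ, jsPoly_succ, Nat.add_sub_cancel_left]
  simp only [C_mul, Nat.cast_add, map_add]
  ring

end

theorem P_eq_map_jsPoly_nat (n : ℕ) : P n = (jsPoly ℕ n).map (mapRingHom (Nat.castRingHom ℤ)) :=
  (map_jsPoly _ n).symm

/-- The sequence `{∑_{k=0}^n js(n,k;z) y^k}_{n≥0}` is strongly `{z,y}`-log-convex: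
for `1 ≤ m ≤ n`, the bivariate polynomial
`(∏_{i=0}^{m-2}(y+i(z+i)))·(∏_{i=0}^{n}(y+i(z+i))) − (∏_{i=0}^{m-1}(y+i(z+i)))·(∏_{i=0}^{n-1}(y+i(z+i)))`
has nonnegative coefficients. -/
theorem js_gf_strongly_log_convex (m n : ℕ) (hm : 1 ≤ m) (hmn : m ≤ n) (i j : ℕ) :
    0 ≤ ((P (m - 1) * P (n + 1) - P m * P n).coeff i).coeff j := by
  obtain ⟨k, rfl⟩ := Nat.exists_eq_add_of_le' hm
  set φ := mapRingHom (mapRingHom (Nat.castRingHom ℤ))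
  have hP : ∀ l, P l = φ (jsPoly ℕ l) := P_eq_map_jsPoly_nat
  have hdiff : P k * P (n + 1) - P (k + 1) * P n =
      φ (jsPoly ℕ k * jsPoly ℕ n * C (C (n - k) * (X + C (n + k)))) := by
    rw [sub_eq_iff_eq_add', hP, hP, hP, hP, ← map_mul, ← map_mul, ← map_add,
      jsPoly_mul_jsPoly_succ (by omega), Nat.cast_id, Nat.cast_id]
  rw [Nat.add_sub_cancel, hdiff]
  simp only [φ, coe_mapRingHom, coeff_map, eq_natCast, Nat.cast_nonneg]
end

section
/- Suppose polynomials T_{n,k} in ℝ_+[x_1,...,x_d] satisfy T_{n,k} = a_{n,k} T_{n-1,k} + b_{n,k} T_{n-1,k-1} for 1 ≤ k ≤ n, with T_{0,0}=1, T_{n,-1}=T_{n,n+1}=0, where a_{n,k} ≥ a_{n,k-1} ≥ 0 and b_{n,k} ≥ b_{n,k-1} ≥ 0 coefficientwise for 1 ≤ k ≤ n. If for each n the sequence {T_{n,k}}_{k=0}^n is strongly x-log-concave, then for all 0 ≤ m ≤ n and 0 ≤ k ≤ l, the polynomial T_{m,k}·T_{n,l} − T_{m,l}·T_{n,k} has nonnegative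 coefficients. -/
open Finset

/-- A multivariate polynomial has nonnegative coefficients. -/
def CoeffNonneg {d : ℕ} (f : MvPolynomial (Fin d) ℝ) : Prop :=
  ∀ mon, 0 ≤ f.coeff mon

/-!
Write `f ≤ₓ g` for `CoeffNonneg (g - f)`. By induction on the row index `n` one proves the
stronger claim `T_{m,i} T_{n,j} ≥ₓ T_{m,i+j-k} T_{n,k}` for `m ≤ n` and `k ≤ i, j`; the theorem
is the case `k = i`. For `m = n` this is strong log-concavity of the row, iterated. For `m < n`,
expanding `T_{n,j}` and `T_{n,k}` by the recurrence splits the difference into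
`a_{n,k} · (claim for n - 1 at (i, j, k)) + (a_{n,j} - a_{n,k}) T_{m,i} T_{n-1,j}` plus the same
two terms with `b` and the indices `(i, j - 1, k - 1)`, all coefficientwise nonnegative because
`a` and `b` are nonnegative and nondecreasing along rows.
-/

namespace CoeffNonneg

variable {d : ℕ} {f g : MvPolynomial (Fin d) ℝ}

theorem zero : CoeffNonneg (0 : MvPolynomial (Fin d) ℝ) := fun _ => le_rfl

theorem add (hf : CoeffNonneg f) (hg : CoeffNonneg g) : CoeffNonneg (f + g) := fun m => by
  rw [MvPolynomial.coeff_add]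
  exact add_nonneg (hf m) (hg m)

theorem mul (hf : CoeffNonneg f) (hg : CoeffNonneg g) : CoeffNonneg (f * g) := fun m => by
  rw [MvPolynomial.coeff_mul]
  exact Finset.sum_nonneg fun p _ => mul_nonneg (hf p.1) (hg p.2)

end CoeffNonneg

section Sequences

variable {d : ℕ}

def NonnegMonotoneUpTo (c : ℤ → MvPolynomial (Fin d) ℝ) (N : ℤ) : Prop :=
  ∀ k, 1 ≤ k → k ≤ N → CoeffNonneg (c (k - 1)) ∧ CoeffNonneg (c k - c (k - 1))

def StronglyLogConcave (f : ℤ → MvPolynomial (Fin d) ℝ) : Prop :=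
  ∀ k l, 1 ≤ k → k ≤ l → CoeffNonneg (f k * f l - f (k - 1) * f (l + 1))

def CrossLogConcave (f g : ℤ → MvPolynomial (Fin d) ℝ) : Prop :=
  ∀ i j k, k ≤ i → k ≤ j → CoeffNonneg (f i * g j - f (i + j - k) * g k)

namespace NonnegMonotoneUpTo

variable {c : ℤ → MvPolynomial (Fin d) ℝ} {N : ℤ}

theorem coeffNonneg_sub (hc : NonnegMonotoneUpTo c N) {k l : ℤ} (hk : 0 ≤ k) (hkl : k ≤ l)
    (hlN : l ≤ N) : CoeffNonneg (c l - c k) := by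
  induction l, hkl using Int.leInduction with
  | base => simpa using CoeffNonneg.zero
  | succ l hkl ih =>
    have hstep := (hc (l + 1) (by omega) hlN).2
    rw [add_sub_cancel_right] at hstep
    simpa using hstep.add (ih (by omega))

theorem coeffNonneg (hc : NonnegMonotoneUpTo c N) (hN : 0 < N) {k : ℤ} (hk : 0 ≤ k)
    (hkN : k ≤ N) : CoeffNonneg (c k) := by
  have hc0 : CoeffNonneg (c 0) := by simpa using (hc 1 le_rfl (by omega)).1
  simpa using (hc.coeffNonneg_sub le_rfl hk hkN).add hc0

end NonnegMonotoneUpTo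

theorem StronglyLogConcave.crossLogConcave_self {f : ℤ → MvPolynomial (Fin d) ℝ}
    (hf : StronglyLogConcave f) (hnonneg : ∀ k, CoeffNonneg (f k))
    (hvanish : ∀ k, k < 0 → f k = 0) : CrossLogConcave f f := by
  suffices h : ∀ i j k, i ≤ j → k ≤ i → CoeffNonneg (f i * f j - f (i + j - k) * f k) by
    intro i j k hki hkj
    rcases le_total i j with hij | hji
    · exact h i j k hij hki
    · simpa only [mul_comm (f i), add_comm i] using h j i k hji hkj
  intro i j k hij hki
  induction k, hki using Int.leInductionDown with
  | base => simp [mul_comm, CoeffNonneg.zero]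
  | pred k hki ih =>
    by_cases hk : k ≤ 0
    · simpa [hvanish (k - 1) (by omega)] using (hnonneg i).mul (hnonneg j)
    · have hlc := hf k (i + j - k) (by omega) (by omega)
      have hsum := ih.add hlc
      rwa [show i + j - k + 1 = i + j - (k - 1) by ring, mul_comm (f k),
        sub_add_sub_cancel, mul_comm (f (k - 1))] at hsum

theorem CrossLogConcave.of_recurrence {f g g' a b : ℤ → MvPolynomial (Fin d) ℝ} {N : ℤ}
    (hfg : CrossLogConcave f g) (hf : ∀ k, CoeffNonneg (f k)) (hg : ∀ k, CoeffNonneg (g k))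
    (hg' : ∀ k, CoeffNonneg (g' k)) (hf_vanish : ∀ k, N < k → f k = 0)
    (hg'_vanish : ∀ k, k < 0 ∨ N < k → g' k = 0)
    (hrec : ∀ k, 0 ≤ k → k ≤ N → g' k = a k * g k + b k * g (k - 1))
    (hN : 0 < N) (ha : NonnegMonotoneUpTo a N) (hb : NonnegMonotoneUpTo b N) :
    CrossLogConcave f g' := by
  intro i j k hki hkj
  by_cases hk : k < 0
  · simpa [hg'_vanish k (Or.inl hk)] using (hf i).mul (hg' j)
  by_cases hjN : N < j
  · simpa [hg'_vanish j (Or.inr hjN), hf_vanish (i + j - k) (by omega)] using CoeffNonneg.zero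
  have hshift := hfg i (j - 1) (k - 1) (by omega) (by omega)
  rw [show i + (j - 1) - (k - 1) = i + j - k by ring] at hshift
  have hsplit : f i * g' j - f (i + j - k) * g' k =
      a k * (f i * g j - f (i + j - k) * g k) + (a j - a k) * (f i * g j) +
      (b k * (f i * g (j - 1) - f (i + j - k) * g (k - 1)) + (b j - b k) * (f i * g (j - 1))) := by
    rw [hrec j (by omega) (by omega), hrec k (by omega) (by omega)]
    ring
  rw [hsplit]
  refine (((ha.coeffNonneg hN ?_ ?_).mul (hfg i j k hki hkj)).add
    ((ha.coeffNonneg_sub ?_ hkj ?_).mul ((hf i).mul (hg j)))).add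
    (((hb.coeffNonneg hN ?_ ?_).mul hshift).add
    ((hb.coeffNonneg_sub ?_ hkj ?_).mul ((hf i).mul (hg (j - 1))))) <;> omega

end Sequences

theorem triangular_recurrence_lemma_general (d : ℕ)
    (T a b : ℕ → ℤ → MvPolynomial (Fin d) ℝ)
    (hT0 : ∀ (n : ℕ) (k : ℤ), k < 0 ∨ (n : ℤ) < k → T n k = 0)
    (hTpos : ∀ (n : ℕ) (k : ℤ), CoeffNonneg (T n k))
    (hrec : ∀ (n : ℕ) (k : ℤ), 0 ≤ k → k ≤ (n : ℤ) + 1 →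
      T (n + 1) k = a (n + 1) k * T n k + b (n + 1) k * T n (k - 1))
    (ha : ∀ (n : ℕ) (k : ℤ), 1 ≤ k → k ≤ (n : ℤ) →
      CoeffNonneg (a n (k - 1)) ∧ CoeffNonneg (a n k - a n (k - 1)))
    (hb : ∀ (n : ℕ) (k : ℤ), 1 ≤ k → k ≤ (n : ℤ) →
      CoeffNonneg (b n (k - 1)) ∧ CoeffNonneg (b n k - b n (k - 1)))
    (hlc : ∀ (n : ℕ) (k l : ℤ), 1 ≤ k → k ≤ l →
      CoeffNonneg (T n k * T n l - T n (k - 1) * T n (l + 1))) :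
    ∀ (m n : ℕ) (k l : ℤ), m ≤ n → 0 ≤ k → k ≤ l →
      CoeffNonneg (T m k * T n l - T m l * T n k) := by
  have hrow : ∀ n, CrossLogConcave (T n) (T n) := fun n =>
    StronglyLogConcave.crossLogConcave_self (hlc n) (hTpos n) fun k hk => hT0 n k (Or.inl hk)
  have hcross : ∀ n m, m ≤ n → CrossLogConcave (T m) (T n) := by
    intro n
    induction n with
    | zero => intro m hm; obtain rfl := Nat.le_zero.mp hm; exact hrow 0
    | succ n ih =>
      intro m hm
      rcases Nat.lt_or_eq_of_le hm with hlt | rfl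
      · exact (ih m (by omega)).of_recurrence (hTpos m) (hTpos n) (hTpos (n + 1))
          (fun k hk => hT0 m k (Or.inr (by omega))) (hT0 (n + 1))
          (fun k h0 h1 => hrec n k h0 (by omega)) (by omega) (ha (n + 1)) (hb (n + 1))
      · exact hrow (n + 1)
  intro m n k l hmn _ hkl
  simpa using hcross n m hmn k l k le_rfl hkl

/-- Triangular recurrence lemma: if `T_{n,k} = a_{n,k} T_{n-1,k} + b_{n,k} T_{n-1,k-1}` with
`T_{0,0} = 1`, boundary zeros, coefficient polynomials `a_{n,k} ≥ a_{n,k-1} ≥ 0` and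
`b_{n,k} ≥ b_{n,k-1} ≥ 0` coefficientwise, and each row `{T_{n,k}}_{k=0}^n` is strongly
x-log-concave, then `T_{m,k}·T_{n,l} − T_{m,l}·T_{n,k}` has nonnegative coefficients for
`0 ≤ m ≤ n` and `0 ≤ k ≤ l`. -/
theorem triangular_recurrence_lemma (d : ℕ)
    (T a b : ℕ → ℤ → MvPolynomial (Fin d) ℝ)
    (hT0 : ∀ (n : ℕ) (k : ℤ), k < 0 ∨ (n : ℤ) < k → T n k = 0)
    (hT1 : T 0 0 = 1)
    (hTpos : ∀ (n : ℕ) (k : ℤ), CoeffNonneg (T n k))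
    (hrec : ∀ (n : ℕ) (k : ℤ), 0 ≤ k → k ≤ (n : ℤ) + 1 →
      T (n + 1) k = a (n + 1) k * T n k + b (n + 1) k * T n (k - 1))
    (ha : ∀ (n : ℕ) (k : ℤ), 1 ≤ k → k ≤ (n : ℤ) →
      CoeffNonneg (a n (k - 1)) ∧ CoeffNonneg (a n k - a n (k - 1)))
    (hb : ∀ (n : ℕ) (k : ℤ), 1 ≤ k → k ≤ (n : ℤ) →
      CoeffNonneg (b n (k - 1)) ∧ CoeffNonneg (b n k - b n (k - 1)))
    (hlc : ∀ (n : ℕ) (k l : ℤ), 1 ≤ k → k ≤ l →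
      CoeffNonneg (T n k * T n l - T n (k - 1) * T n (l + 1))) :
    ∀ (m n : ℕ) (k l : ℤ), m ≤ n → 0 ≤ k → k ≤ l →
      CoeffNonneg (T m k * T n l - T m l * T n k) :=
  triangular_recurrence_lemma_general d T a b hT0 hTpos hrec ha hb hlc
end

section
/- The coefficient polynomials Q_{n,k}(x,t) defined by Q_n(x,y,1,t) = ∑_{k=0}^{n-1} Q_{n,k}(x,t) y^k satisfy Q_{1,0}=1 and, for n ≥ 2, Q_{n,k}(x,t) = [x + n − 1 + t(n + k − 1)]·Q_{n-1,k}(x,t) + (n + k − 2)·Q_{n-1,k-1}(x,t), where Q_{n,k}=0 if k ≥ n or k < 0. -/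
/-!
Setting `z = 1` commutes with `∂_y`, because `y` is the only variable sent to the polynomial
variable, so `Q_n(x,y,1,t)` is obtained by iterating the operator `x + n + (y+t)(n + y∂_y)` on
`ℤ[x,t][y]`. That operator raises the `y`-degree by at most one, and the recurrence for the
coefficients is read off from the coefficient of `y^k` in its output.
-/

/-- The generalized Ramanujan polynomials `Q_n(x,y,z,t)` of Chapoton, in the variables
`x = X 0`, `y = X 1`, `z = X 2`, `t = X 3`:
`Q_1 = 1` and `Q_{n+1} = [x + nz + (y+t)(n + y∂_y)] Q_n`. -/
noncomputable def Q : ℕ → MvPolynomial (Fin 4) ℤ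
  | 0 => 0
  | 1 => 1
  | n+2 =>
    (MvPolynomial.X 0 + MvPolynomial.C ((n : ℤ) + 1) * MvPolynomial.X 2) * Q (n+1) +
      (MvPolynomial.X 1 + MvPolynomial.X 3) *
        (MvPolynomial.C ((n : ℤ) + 1) * Q (n+1) +
          MvPolynomial.X 1 * MvPolynomial.pderiv 1 (Q (n+1)))

/-- `Q_n(x,y,1,t)` as a polynomial in `y` with coefficients in `ℤ[x,t]`
(`x = X 0`, `t = X 1` in the coefficient ring). -/
noncomputable def Qy (n : ℕ) : Polynomial (MvPolynomial (Fin 2) ℤ) :=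
  MvPolynomial.aeval
    (fun i : Fin 4 =>
      if i = 0 then Polynomial.C (MvPolynomial.X 0)
      else if i = 1 then Polynomial.X
      else if i = 2 then 1
      else Polynomial.C (MvPolynomial.X 1)) (Q n)

/-- `Q_{n,k}(x,t)`: the coefficient of `y^k` in `Q_n(x,y,1,t)`. -/
noncomputable def Qnk (n k : ℕ) : MvPolynomial (Fin 2) ℤ := (Qy n).coeff k

open Polynomial

noncomputable def specializeZOne : Fin 4 → (MvPolynomial (Fin 2) ℤ)[X] := fun i =>
  if i = 0 then C (MvPolynomial.X 0) else if i = 1 then X else if i = 2 then 1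
  else C (MvPolynomial.X 1)

theorem derivative_aeval_eq_aeval_pderiv {σ R S : Type*} [CommSemiring R] [CommSemiring S]
    [Algebra R S] (g : σ → S[X]) (j : σ) (hj : g j = X)
    (hg : ∀ i, i ≠ j → derivative (g i) = 0) (p : MvPolynomial σ R) :
    derivative (MvPolynomial.aeval g p) = MvPolynomial.aeval g (MvPolynomial.pderiv j p) := by
  classical
  induction p using MvPolynomial.induction_on with
  | C a => simp [Polynomial.algebraMap_apply]
  | add p q hp hq => simp only [map_add, hp, hq]
  | mul_X p i hp =>
    rw [map_mul, derivative_mul, hp, Derivation.leibniz, MvPolynomial.pderiv_X]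
    by_cases hij : i = j
    · subst hij
      simp only [MvPolynomial.aeval_X, hj, derivative_X, mul_one, Pi.single_eq_same, smul_eq_mul,
        map_add, map_mul]
      ring
    · simp [hg i hij, hij, mul_comm]

section RamanujanOperator

variable {R : Type*} [CommSemiring R]

/-- `x + nz + (y+t)(n + y∂_y)` at `z = 1`, with `a = x + n` and `c = n`. -/
noncomputable def ramanujanOp (a t c : R) (p : R[X]) : R[X] :=
  C a * p + (X + C t) * (C c * p + X * derivative p)

theorem natDegree_X_mul_derivative_le (p : R[X]) : (X * derivative p).natDegree ≤ p.natDegree := by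
  rcases eq_or_ne (derivative p) 0 with h | h
  · simp [h]
  · have hlt := natDegree_derivative_lt (fun hp => h (derivative_of_natDegree_zero hp))
    have hX := natDegree_X_le (R := R)
    exact natDegree_mul_le.trans (by omega)

theorem natDegree_ramanujanOp_le (a t c : R) (p : R[X]) :
    (ramanujanOp a t c p).natDegree ≤ p.natDegree + 1 := by
  have hlin : (X + C t).natDegree ≤ 1 :=
    natDegree_add_le_of_degree_le natDegree_X_le (natDegree_C t ▸ zero_le_one)
  have hinner : (C c * p + X * derivative p).natDegree ≤ p.natDegree :=
    natDegree_add_le_of_degree_le (natDegree_C_mul_le c p) (natDegree_X_mul_derivative_le p)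
  refine natDegree_add_le_of_degree_le ((natDegree_C_mul_le a p).trans (Nat.le_succ _)) ?_
  exact (natDegree_mul_le_of_le hlin hinner).trans (by omega)

theorem coeff_ramanujanOp_zero (a t c : R) (p : R[X]) :
    (ramanujanOp a t c p).coeff 0 = (a + t * c) * p.coeff 0 := by
  simp only [ramanujanOp, coeff_add, mul_coeff_zero, coeff_C_zero, coeff_X_zero, zero_add, zero_mul,
    add_zero]
  ring

theorem coeff_ramanujanOp_succ (a t c : R) (p : R[X]) (k : ℕ) :
    (ramanujanOp a t c p).coeff (k + 1) =
      (a + t * (c + (k + 1))) * p.coeff (k + 1) + (c + k) * p.coeff k := by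
  simp only [ramanujanOp, add_mul, mul_add, coeff_add, coeff_C_mul, coeff_X_mul, coeff_derivative]
  rcases k with _ | k
  · simp only [zero_add, mul_coeff_zero, coeff_X_zero, coeff_derivative, Nat.cast_zero, mul_one,
      zero_mul, mul_zero, add_zero]
    ring
  · simp only [coeff_X_mul, coeff_derivative, Nat.cast_add, Nat.cast_one, mul_one]
    ring

end RamanujanOperator

theorem Qy_one : Qy 1 = 1 := map_one _

theorem Qy_succ (n : ℕ) :
    Qy (n + 2) =
      ramanujanOp (R := MvPolynomial (Fin 2) ℤ) (.X 0 + (n + 1)) (.X 1) (n + 1)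
        (Qy (n + 1)) := by
  have hderiv := derivative_aeval_eq_aeval_pderiv (R := ℤ) specializeZOne 1 rfl
    (by intro i hi; fin_cases i <;> simp [specializeZOne] at hi ⊢) (Q (n + 1))
  change MvPolynomial.aeval specializeZOne (Q (n + 2)) =
    ramanujanOp _ _ _ (MvPolynomial.aeval specializeZOne (Q (n + 1)))
  simp only [Q, map_add, map_mul, ← hderiv]
  simp [specializeZOne, ramanujanOp]

theorem natDegree_Qy_le (n : ℕ) : (Qy (n + 1)).natDegree ≤ n := by
  induction n with
  | zero => simp [Qy_one]
  | succ n ih => exact Qy_succ n ▸ (natDegree_ramanujanOp_le _ _ _ _).trans (by omega)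

/-- The coefficients `Q_{n,k}(x,t)` of `Q_n(x,y,1,t) = ∑_{k=0}^{n-1} Q_{n,k}(x,t) y^k`
satisfy `Q_{1,0} = 1`, vanish for `k ≥ n`, and for `n ≥ 2` satisfy
`Q_{n,k} = [x + n−1 + t(n+k−1)]·Q_{n-1,k} + (n+k−2)·Q_{n-1,k-1}`. -/
theorem Qnk_recurrence :
    Qnk 1 0 = 1 ∧
    (∀ n k : ℕ, 1 ≤ n → n ≤ k → Qnk n k = 0) ∧
    (∀ n : ℕ, 2 ≤ n →
      Qnk n 0 =
        (MvPolynomial.X 0 + MvPolynomial.C ((n : ℤ) - 1) +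
            MvPolynomial.X 1 * MvPolynomial.C ((n : ℤ) - 1)) * Qnk (n - 1) 0) ∧
    (∀ n k : ℕ, 2 ≤ n →
      Qnk n (k + 1) =
        (MvPolynomial.X 0 + MvPolynomial.C ((n : ℤ) - 1) +
            MvPolynomial.X 1 * MvPolynomial.C ((n : ℤ) + (k : ℤ))) * Qnk (n - 1) (k + 1) +
          MvPolynomial.C ((n : ℤ) + (k : ℤ) - 1) * Qnk (n - 1) k) := by
  refine ⟨by simp [Qnk, Qy_one], ?_, ?_, ?_⟩
  · intro n k hn hk
    obtain ⟨m, rfl⟩ := Nat.exists_eq_add_of_le' hn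
    exact coeff_eq_zero_of_natDegree_lt ((natDegree_Qy_le m).trans_lt (by omega))
  · intro n hn
    obtain ⟨m, rfl⟩ := Nat.exists_eq_add_of_le' hn
    simp only [Qnk, Qy_succ, coeff_ramanujanOp_zero]
    push_cast [map_add, map_sub, map_natCast, map_one, map_ofNat]
    ring
  · intro n k hn
    obtain ⟨m, rfl⟩ := Nat.exists_eq_add_of_le' hn
    simp only [Qnk, Qy_succ, coeff_ramanujanOp_succ]
    push_cast [map_add, map_sub, map_natCast, map_one, map_ofNat]
    ring
end

section
/- The generalized Ramanujan polynomials are strongly {x,y,z,t}-log-convex: for all 2 ≤ m ≤ n, the polynomial Q_{m-1}(x,y,z,t)·Q_{n+1}(x,y,z,t) − Q_m(x,y,z,t)·Q_n(x,y,z,t) has nonnegative integer coefficients. -/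
open Finset

/-!
Write `θ = y ∂_y`. The recurrence reads
`Q_{k+2} = (x + (k+1)(y+z+t)) Q_{k+1} + (y+t) θ Q_{k+1}`, hence
`Q_{k+1} Q_{l+2} - Q_{k+2} Q_{l+1} = (l-k)(y+z+t) Q_{k+1} Q_{l+1} + (y+t) W(Q_{k+1}, Q_{l+1})`
with the θ-Wronskian `W(P, K) = P θK - θP K`, and it remains to show `W(Q_a, Q_b) ≥ 0`
coefficientwise for `a ≤ b`. For fixed `P ≥ 0`, the polynomials `K ≥ 0` with `W(P, θ^i K) ≥ 0`
for all `i` contain `P` (symmetrize, using that `θ` acts diagonally on monomials) and are closed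
under sums, under `θ` and under multiplication by polynomials `≥ 0` (since `θ` is a derivation).
By the recurrence they contain every `Q_b` with `b ≥ a` when `P = Q_a`.
-/

open MvPolynomial

section

variable {σ R : Type*} [CommRing R] [LinearOrder R] [IsStrictOrderedRing R]

theorem sub_mul_pow_sub_pow_nonneg {a b : R} (ha : 0 ≤ a) (hb : 0 ≤ b) (i : ℕ) :
    0 ≤ (a - b) * (a ^ i - b ^ i) := by
  rcases le_total b a with h | h
  · exact mul_nonneg (sub_nonneg.2 h) (sub_nonneg.2 (pow_le_pow_left₀ hb h i))
  · exact mul_nonneg_of_nonpos_of_nonpos (sub_nonpos.2 h) (sub_nonpos.2 (pow_le_pow_left₀ ha h i))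

theorem Finsupp.sum_antidiagonal_nonneg_of_add_swap [DecidableEq σ] {f : (σ →₀ ℕ) × (σ →₀ ℕ) → R}
    (hf : ∀ x, 0 ≤ f x + f x.swap) (m : σ →₀ ℕ) : 0 ≤ ∑ x ∈ antidiagonal m, f x := by
  have h2 : 2 * ∑ x ∈ antidiagonal m, f x = ∑ x ∈ antidiagonal m, (f x + f x.swap) := by
    rw [Finset.sum_add_distrib, two_mul]
    congr 1
    exact Finsupp.sum_antidiagonal_swap m fun a b => f (a, b)
  have : 0 ≤ 2 * ∑ x ∈ antidiagonal m, f x := h2 ▸ Finset.sum_nonneg fun x _ => hf x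
  linarith

end

namespace MvPolynomial

section Semiring

variable {σ R : Type*} [CommSemiring R]

noncomputable def theta (j : σ) : Derivation R (MvPolynomial σ R) (MvPolynomial σ R) :=
  (X j : MvPolynomial σ R) • pderiv j

theorem theta_apply (j : σ) (p : MvPolynomial σ R) : theta j p = X j * pderiv j p := rfl

theorem theta_mul (j : σ) (p q : MvPolynomial σ R) :
    theta j (p * q) = theta j p * q + p * theta j q := by
  rw [Derivation.leibniz, smul_eq_mul, smul_eq_mul, add_comm, mul_comm q]

theorem coeff_theta (j : σ) (p : MvPolynomial σ R) (m : σ →₀ ℕ) :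
    coeff m (theta j p) = m j * coeff m p := by
  classical
  rw [theta_apply, coeff_X_mul']
  split_ifs with h
  · have hle : Finsupp.single j 1 ≤ m :=
      Finsupp.single_le_iff.mpr (Nat.one_le_iff_ne_zero.mpr (Finsupp.mem_support_iff.mp h))
    rw [coeff_pderiv, tsub_add_cancel_of_le hle, Finsupp.tsub_apply, Finsupp.single_eq_same,
      ← Nat.cast_add_one, Nat.sub_add_cancel (Finsupp.single_le_iff.mp hle), mul_comm]
  · rw [Finsupp.notMem_support_iff.mp h, Nat.cast_zero, zero_mul]

theorem coeff_theta_iterate (j : σ) (i : ℕ) (p : MvPolynomial σ R) (m : σ →₀ ℕ) :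
    coeff m ((theta j)^[i] p) = (m j : R) ^ i * coeff m p := by
  induction i with
  | zero => simp
  | succ i ih => rw [Function.iterate_succ_apply', coeff_theta, ih, pow_succ', mul_assoc]

variable [PartialOrder R] [IsOrderedRing R]

variable (σ R) in
def nonnegCoeffs : Subsemiring (MvPolynomial σ R) where
  carrier := {p | ∀ m, 0 ≤ coeff m p}
  zero_mem' m := by simp
  one_mem' m := by classical rw [coeff_one]; split_ifs <;> simp
  add_mem' hp hq m := by rw [coeff_add]; exact add_nonneg (hp m) (hq m)
  mul_mem' hp hq m := by
    classical
    rw [coeff_mul]; exact Finset.sum_nonneg fun x _ => mul_nonneg (hp x.1) (hq x.2)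

theorem C_mem_nonnegCoeffs {a : R} (ha : 0 ≤ a) : (C a : MvPolynomial σ R) ∈ nonnegCoeffs σ R :=
  fun m => by classical rw [coeff_C]; split_ifs <;> simp [ha]

theorem X_mem_nonnegCoeffs (j : σ) : (X j : MvPolynomial σ R) ∈ nonnegCoeffs σ R := fun m => by
  classical
  rw [coeff_X]; split_ifs <;> simp

theorem theta_iterate_mem_nonnegCoeffs {p : MvPolynomial σ R} (hp : p ∈ nonnegCoeffs σ R)
    (j : σ) (i : ℕ) : (theta j)^[i] p ∈ nonnegCoeffs σ R := fun m => by
  rw [coeff_theta_iterate]; exact mul_nonneg (by positivity) (hp m)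

theorem theta_mem_nonnegCoeffs {p : MvPolynomial σ R} (hp : p ∈ nonnegCoeffs σ R) (j : σ) :
    theta j p ∈ nonnegCoeffs σ R :=
  theta_iterate_mem_nonnegCoeffs hp j 1

end Semiring

section CommRing

variable {σ R : Type*} [CommRing R]

noncomputable def thetaWronskian (j : σ) (P K : MvPolynomial σ R) : MvPolynomial σ R :=
  P * theta j K - theta j P * K

theorem thetaWronskian_add (j : σ) (P K L : MvPolynomial σ R) :
    thetaWronskian j P (K + L) = thetaWronskian j P K + thetaWronskian j P L := by
  simp only [thetaWronskian, map_add]; ring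

theorem thetaWronskian_mul (j : σ) (P M K : MvPolynomial σ R) :
    thetaWronskian j P (M * K) = P * K * theta j M + M * thetaWronskian j P K := by
  rw [thetaWronskian, thetaWronskian, theta_mul]; ring

variable [PartialOrder R] [IsOrderedRing R]

def thetaWronskianCone (j : σ) (P : MvPolynomial σ R) : AddSubmonoid (MvPolynomial σ R) where
  carrier := {K | K ∈ nonnegCoeffs σ R ∧
    ∀ i, thetaWronskian j P ((theta j)^[i] K) ∈ nonnegCoeffs σ R}
  zero_mem' := ⟨zero_mem _, fun i => by simp [thetaWronskian]⟩
  add_mem' hK hL := ⟨add_mem hK.1 hL.1, fun i => by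
    rw [iterate_map_add, thetaWronskian_add]; exact add_mem (hK.2 i) (hL.2 i)⟩

variable {j : σ} {P : MvPolynomial σ R}

theorem theta_mem_thetaWronskianCone {K : MvPolynomial σ R} (hK : K ∈ thetaWronskianCone j P) :
    theta j K ∈ thetaWronskianCone j P :=
  ⟨theta_mem_nonnegCoeffs hK.1 j, fun i => by
    rw [← Function.iterate_succ_apply]; exact hK.2 (i + 1)⟩

theorem mul_mem_thetaWronskianCone (hP : P ∈ nonnegCoeffs σ R) {M K : MvPolynomial σ R}
    (hM : M ∈ nonnegCoeffs σ R) (hK : K ∈ thetaWronskianCone j P) :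
    M * K ∈ thetaWronskianCone j P := by
  refine ⟨mul_mem hM hK.1, fun i => ?_⟩
  induction i generalizing M K with
  | zero =>
    rw [Function.iterate_zero_apply, thetaWronskian_mul]
    exact add_mem (mul_mem (mul_mem hP hK.1) (theta_mem_nonnegCoeffs hM j)) (mul_mem hM (hK.2 0))
  | succ i ih =>
    rw [Function.iterate_succ_apply, theta_mul, iterate_map_add, thetaWronskian_add]
    exact add_mem (ih (theta_mem_nonnegCoeffs hM j) hK)
      (ih hM (theta_mem_thetaWronskianCone hK))

end CommRing

section LinearOrderedRing

variable {σ R : Type*} [CommRing R] [LinearOrder R] [IsStrictOrderedRing R]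

/-- Symmetrizing over `m = s + u`, the coefficient of `X^m` is
`½ ∑ p_s p_u (u_j - s_j) (u_j ^ i - s_j ^ i) ≥ 0`. -/
theorem thetaWronskian_theta_iterate_self_mem {P : MvPolynomial σ R}
    (hP : P ∈ nonnegCoeffs σ R) (j : σ) (i : ℕ) :
    thetaWronskian j P ((theta j)^[i] P) ∈ nonnegCoeffs σ R := by
  classical
  intro m
  rw [thetaWronskian, ← Function.iterate_succ_apply' (theta j), coeff_sub, coeff_mul, coeff_mul,
    ← Finset.sum_sub_distrib]
  simp only [coeff_theta_iterate, coeff_theta]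
  refine Finsupp.sum_antidiagonal_nonneg_of_add_swap (fun x => ?_) m
  have key := mul_nonneg (mul_nonneg (hP x.1) (hP x.2))
    (sub_mul_pow_sub_pow_nonneg (Nat.cast_nonneg' (x.2 j)) (Nat.cast_nonneg' (x.1 j)) i)
  simp only [Prod.fst_swap, Prod.snd_swap, Nat.succ_eq_add_one]
  linear_combination key

variable {j : σ} {P : MvPolynomial σ R}

theorem self_mem_thetaWronskianCone (hP : P ∈ nonnegCoeffs σ R) : P ∈ thetaWronskianCone j P :=
  ⟨hP, thetaWronskian_theta_iterate_self_mem hP j⟩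

end LinearOrderedRing

end MvPolynomial

theorem Q_add_two (k : ℕ) :
    Q (k + 2) = (X 0 + C ((k : ℤ) + 1) * (X 1 + X 2 + X 3)) * Q (k + 1) +
      (X 1 + X 3) * theta 1 (Q (k + 1)) := by
  rw [Q, theta_apply]; ring

theorem X_add_C_mul_mem_nonnegCoeffs (k : ℕ) :
    X 0 + C ((k : ℤ) + 1) * (X 1 + X 2 + X 3) ∈ nonnegCoeffs (Fin 4) ℤ :=
  add_mem (X_mem_nonnegCoeffs 0) <| mul_mem (C_mem_nonnegCoeffs (by positivity)) <|
    add_mem (add_mem (X_mem_nonnegCoeffs 1) (X_mem_nonnegCoeffs 2)) (X_mem_nonnegCoeffs 3)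

theorem Q_mem_nonnegCoeffs (n : ℕ) : Q n ∈ nonnegCoeffs (Fin 4) ℤ := by
  induction n with
  | zero => exact zero_mem _
  | succ n ih =>
    cases n with
    | zero => exact one_mem _
    | succ k =>
      rw [Q_add_two]
      exact add_mem (mul_mem (X_add_C_mul_mem_nonnegCoeffs k) ih)
        (mul_mem (add_mem (X_mem_nonnegCoeffs 1) (X_mem_nonnegCoeffs 3))
          (theta_mem_nonnegCoeffs ih 1))

theorem Q_mem_thetaWronskianCone {a b : ℕ} (hab : a ≤ b) :
    Q (b + 1) ∈ thetaWronskianCone 1 (Q (a + 1)) := by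
  have hQa := Q_mem_nonnegCoeffs (a + 1)
  induction b, hab using Nat.le_induction with
  | base => exact self_mem_thetaWronskianCone hQa
  | succ b _ ih =>
    rw [Q_add_two]
    exact add_mem (mul_mem_thetaWronskianCone hQa (X_add_C_mul_mem_nonnegCoeffs b) ih)
      (mul_mem_thetaWronskianCone hQa (add_mem (X_mem_nonnegCoeffs 1) (X_mem_nonnegCoeffs 3))
        (theta_mem_thetaWronskianCone ih))

theorem Q_mul_Q_sub_Q_mul_Q (k l : ℕ) :
    Q (k + 1) * Q (l + 2) - Q (k + 2) * Q (l + 1) =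
      C ((l : ℤ) - k) * (X 1 + X 2 + X 3) * (Q (k + 1) * Q (l + 1)) +
        (X 1 + X 3) * thetaWronskian 1 (Q (k + 1)) (Q (l + 1)) := by
  have hC : C ((l : ℤ) + 1) = C ((l : ℤ) - k) + (C ((k : ℤ) + 1) : MvPolynomial (Fin 4) ℤ) := by
    rw [← C_add]; ring_nf
  rw [Q_add_two, Q_add_two, hC, thetaWronskian]; ring

/-- The generalized Ramanujan polynomials are strongly `{x,y,z,t}`-log-convex: for
`2 ≤ m ≤ n`, the polynomial `Q_{m-1}·Q_{n+1} − Q_m·Q_n` has nonnegative (integer)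
coefficients. -/
theorem Q_strongly_log_convex (m n : ℕ) (hm : 2 ≤ m) (hmn : m ≤ n) (mon : Fin 4 →₀ ℕ) :
    0 ≤ (Q (m - 1) * Q (n + 1) - Q m * Q n).coeff mon := by
  obtain ⟨k, rfl⟩ : ∃ k, m = k + 2 := ⟨m - 2, by omega⟩
  obtain ⟨l, rfl⟩ : ∃ l, n = l + 1 := ⟨n - 1, by omega⟩
  rw [show k + 2 - 1 = k + 1 by omega, Q_mul_Q_sub_Q_mul_Q]
  have hlk : (0 : ℤ) ≤ l - k := by omega
  have hW := (Q_mem_thetaWronskianCone (show k ≤ l by omega)).2 0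
  refine add_mem (mul_mem (mul_mem (C_mem_nonnegCoeffs hlk) ?_)
    (mul_mem (Q_mem_nonnegCoeffs _) (Q_mem_nonnegCoeffs _))) (mul_mem ?_ hW) mon
  · exact add_mem (add_mem (X_mem_nonnegCoeffs 1) (X_mem_nonnegCoeffs 2)) (X_mem_nonnegCoeffs 3)
  · exact add_mem (X_mem_nonnegCoeffs 1) (X_mem_nonnegCoeffs 3)
end

section
/- If A(x) = ∑_{i=0}^d a_i x^i is a polynomial whose coefficient sequence (a_0,...,a_d) is nonnegative, log-concave (a_i^2 ≥ a_{i-1}a_{i+1} for 0 < i < d), and has no internal zeros, then the coefficients of A(x+1) are also nonnegative, log-concave, and have no internal zeros. -/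
open Polynomial Finset

/-! Write `A = a₀ + X·B`, so that `A(X+1) = a₀ + (X+1)·P` with `P = B(X+1)`, and induct on
the degree. Multiplying by `X+1` preserves log-concavity of a nonnegative sequence without
internal zeros, so adding `a₀` to the constant term only threatens the first inequality
`(a₀ + p₀)(p₁ + p₂) ≤ (p₀ + p₁)²`. Besides `p₀p₂ ≤ p₁²` it needs `a₀p₁ ≤ p₀²`, i.e.
`a₀·B'(1) ≤ B(1)²`, which holds coefficientwise between `a₀·B'` and `B²` because log-concavity
without internal zeros gives `a₀·a_{i+j+2} ≤ a_{i+1}·a_{j+1}`; the last term `a₀p₂ ≤ p₀p₁`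
follows from these two. -/

def LogConcave {M : Type*} [Monoid M] [LE M] (a : ℕ → M) : Prop :=
  ∀ i, a i * a (i + 2) ≤ a (i + 1) ^ 2

def NoInternalZeros {M : Type*} [Zero M] (a : ℕ → M) : Prop :=
  ∀ i j k, i < j → j < k → a i ≠ 0 → a k ≠ 0 → a j ≠ 0

theorem logConcave_iff {M : Type*} [Monoid M] [LE M] {a : ℕ → M} :
    LogConcave a ↔ ∀ i, 1 ≤ i → a (i - 1) * a (i + 1) ≤ a i ^ 2 := by
  refine ⟨fun h i hi => ?_, fun h i => by simpa using h (i + 1) (Nat.le_add_left 1 i)⟩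
  obtain ⟨j, rfl⟩ := Nat.exists_eq_add_of_le' hi
  simpa using h j

variable {R : Type*} [CommRing R] [LinearOrder R] [IsStrictOrderedRing R]

namespace LogConcave

variable {a : ℕ → R} (hlc : LogConcave a) (h0 : ∀ n, 0 ≤ a n) (hiz : NoInternalZeros a)
include hlc h0 hiz

theorem mul_succ_le_succ_mul {i j : ℕ} (hij : i ≤ j) : a i * a (j + 1) ≤ a (i + 1) * a j := by
  induction j, hij using Nat.le_induction with
  | base => exact (mul_comm _ _).le
  | succ j hij ih =>
    rcases (h0 i).eq_or_lt with hi | hi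
    · rw [← hi, zero_mul]
      exact mul_nonneg (h0 _) (h0 _)
    rcases (h0 (j + 2)).eq_or_lt with hk | hk
    · rw [← hk, mul_zero]
      exact mul_nonneg (h0 _) (h0 _)
    have hj : 0 < a j := by
      rcases hij.eq_or_lt with rfl | hij
      · exact hi
      · exact (h0 j).lt_of_ne' (hiz i j (j + 2) hij (by omega) hi.ne' hk.ne')
    have hj1 : 0 < a (j + 1) :=
      (h0 _).lt_of_ne' (hiz i (j + 1) (j + 2) (by omega) (by omega) hi.ne' hk.ne')
    refine le_of_mul_le_mul_left ?_ (mul_pos hj hj1)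
    calc a j * a (j + 1) * (a i * a (j + 2)) = (a i * a (j + 1)) * (a j * a (j + 2)) := by ring
      _ ≤ (a (i + 1) * a j) * a (j + 1) ^ 2 :=
          mul_le_mul ih (hlc j) (mul_nonneg (h0 _) (h0 _)) (mul_nonneg (h0 _) (h0 _))
      _ = a j * a (j + 1) * (a (i + 1) * a (j + 1)) := by ring

theorem mul_add_add_le (i n m : ℕ) : a i * a (i + n + m) ≤ a (i + n) * a (i + m) := by
  wlog hnm : n ≤ m generalizing n m
  · rw [add_right_comm, mul_comm (a (i + n))]
    exact this m n (by omega)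
  induction n generalizing m with
  | zero => simp
  | succ n ih =>
    calc a i * a (i + (n + 1) + m) = a i * a (i + n + (m + 1)) := by ring_nf
      _ ≤ a (i + n) * a (i + m + 1) := ih (m + 1) (by omega)
      _ ≤ a (i + n + 1) * a (i + m) := hlc.mul_succ_le_succ_mul h0 hiz (by omega)

theorem add_succ : LogConcave fun n => a n + a (n + 1) := by
  intro k
  have hexch := hlc.mul_succ_le_succ_mul h0 hiz (Nat.le_add_right k 2)
  linear_combination hlc k + hlc (k + 1) + hexch

end LogConcave

namespace Polynomial

variable {p q : R[X]}

theorem eval_one_nonneg (h : ∀ n, 0 ≤ p.coeff n) : 0 ≤ p.eval 1 := by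
  rw [eval_eq_sum_range]
  exact sum_nonneg fun n _ => by simpa using h n

theorem eval_one_le_eval_one (h : ∀ n, p.coeff n ≤ q.coeff n) : p.eval 1 ≤ q.eval 1 := by
  simpa using eval_one_nonneg (p := q - p) fun n => by simpa using h n

theorem coeff_le_eval_one (h : ∀ n, 0 ≤ p.coeff n) (n : ℕ) : p.coeff n ≤ p.eval 1 := by
  refine (eval_one_le_eval_one (p := monomial n (p.coeff n)) fun i => ?_).trans_eq' (by simp)
  rw [coeff_monomial]
  split_ifs with hi
  · rw [hi]
  · exact h i

theorem coeff_hasseDeriv_nonneg (h0 : ∀ n, 0 ≤ p.coeff n) (k n : ℕ) :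
    0 ≤ (hasseDeriv k p).coeff n := by
  rw [hasseDeriv_coeff]
  exact mul_nonneg (Nat.cast_nonneg _) (h0 _)

theorem coeff_taylor_one_nonneg (h0 : ∀ n, 0 ≤ p.coeff n) (n : ℕ) :
    0 ≤ (taylor 1 p).coeff n := by
  rw [taylor_coeff]
  exact eval_one_nonneg (coeff_hasseDeriv_nonneg h0 n)

theorem coeff_taylor_one_pos_of_le (h0 : ∀ n, 0 ≤ p.coeff n) {j k : ℕ}
    (hk : (taylor 1 p).coeff k ≠ 0) (hjk : j ≤ k) : 0 < (taylor 1 p).coeff j := by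
  rw [taylor_coeff] at hk ⊢
  obtain ⟨i, hi⟩ : ∃ i, (hasseDeriv k p).coeff i ≠ 0 := by
    by_contra! h
    exact hk (by rw [show hasseDeriv k p = 0 from ext h, eval_zero])
  rw [hasseDeriv_coeff] at hi
  have hpos : 0 < p.coeff (i + k) := (h0 _).lt_of_ne' (right_ne_zero_of_mul hi)
  calc 0 < (hasseDeriv j p).coeff (i + k - j) := by
        rw [hasseDeriv_coeff, Nat.sub_add_cancel (by omega)]
        exact mul_pos (Nat.cast_pos.mpr (Nat.choose_pos (by omega))) hpos
    _ ≤ (hasseDeriv j p).eval 1 := coeff_le_eval_one (coeff_hasseDeriv_nonneg h0 j) _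

theorem noInternalZeros_coeff_taylor_one (h0 : ∀ n, 0 ≤ p.coeff n) :
    NoInternalZeros (taylor 1 p).coeff :=
  fun _ _ _ _ hjk _ hk => (coeff_taylor_one_pos_of_le h0 hk hjk.le).ne'

theorem coeff_zero_mul_eval_one_derivative_divX_le (h0 : ∀ n, 0 ≤ p.coeff n)
    (hlc : LogConcave p.coeff) (hiz : NoInternalZeros p.coeff) :
    p.coeff 0 * p.divX.derivative.eval 1 ≤ p.divX.eval 1 ^ 2 := by
  have hcoeff (k : ℕ) :
      (C (p.coeff 0) * p.divX.derivative).coeff k ≤ (p.divX * p.divX).coeff k := by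
    rw [coeff_C_mul, coeff_derivative, coeff_divX, coeff_mul]
    calc p.coeff 0 * (p.coeff (k + 1 + 1) * (k + 1))
        = ∑ _x ∈ antidiagonal k, p.coeff 0 * p.coeff (k + 1 + 1) := by
          rw [sum_const, Nat.card_antidiagonal, nsmul_eq_mul]
          push_cast
          ring
      _ ≤ ∑ x ∈ antidiagonal k, p.divX.coeff x.1 * p.divX.coeff x.2 := by
          refine sum_le_sum fun x hx => ?_
          rw [HasAntidiagonal.mem_antidiagonal] at hx
          rw [coeff_divX, coeff_divX, ← hx]
          simpa [add_add_add_comm] using hlc.mul_add_add_le h0 hiz 0 (x.1 + 1) (x.2 + 1)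
  simpa [sq] using eval_one_le_eval_one hcoeff

theorem logConcave_coeff_taylor_one_of_divX (h0 : ∀ n, 0 ≤ p.coeff n)
    (hlc : LogConcave p.coeff) (hiz : NoInternalZeros p.coeff)
    (hP : LogConcave (taylor 1 p.divX).coeff) : LogConcave (taylor 1 p).coeff := by
  set P := taylor 1 p.divX
  have hB_nonneg (n : ℕ) : 0 ≤ p.divX.coeff n := by
    simpa only [coeff_divX] using h0 (n + 1)
  have hP_nonneg (n : ℕ) : 0 ≤ P.coeff n := coeff_taylor_one_nonneg hB_nonneg n
  have hdecomp : taylor 1 p = (X + 1) * P + C (p.coeff 0) := by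
    calc taylor 1 p = taylor 1 (X * p.divX + C (p.coeff 0)) := by rw [X_mul_divX_add]
      _ = (X + 1) * P + C (p.coeff 0) := by rw [map_add, taylor_mul, taylor_X, taylor_C, C_1]
  have hzero : (taylor 1 p).coeff 0 = P.coeff 0 + p.coeff 0 := by
    simp [hdecomp, add_mul]
  have hsucc (n : ℕ) : (taylor 1 p).coeff (n + 1) = P.coeff n + P.coeff (n + 1) := by
    simp [hdecomp, add_mul, coeff_X_mul]
  rintro (_ | k)
  · have hP₀₂ := hP 0
    have ha₀P₁ : p.coeff 0 * P.coeff 1 ≤ P.coeff 0 ^ 2 := by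
      rw [taylor_coeff_zero, taylor_coeff_one]
      exact coeff_zero_mul_eval_one_derivative_divX_le h0 hlc hiz
    have ha₀P₂ : p.coeff 0 * P.coeff 2 ≤ P.coeff 0 * P.coeff 1 := by
      rcases (hP_nonneg 2).eq_or_lt with h2 | h2
      · rw [← h2, mul_zero]
        exact mul_nonneg (hP_nonneg 0) (hP_nonneg 1)
      have hP₀ : 0 < P.coeff 0 := coeff_taylor_one_pos_of_le hB_nonneg h2.ne' (Nat.zero_le 2)
      refine le_of_mul_le_mul_left ?_ hP₀
      calc P.coeff 0 * (p.coeff 0 * P.coeff 2) = p.coeff 0 * (P.coeff 0 * P.coeff 2) := by ring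
        _ ≤ p.coeff 0 * P.coeff 1 ^ 2 := mul_le_mul_of_nonneg_left hP₀₂ (h0 0)
        _ = P.coeff 1 * (p.coeff 0 * P.coeff 1) := by ring
        _ ≤ P.coeff 1 * P.coeff 0 ^ 2 := mul_le_mul_of_nonneg_left ha₀P₁ (hP_nonneg 1)
        _ = P.coeff 0 * (P.coeff 0 * P.coeff 1) := by ring
    rw [hzero, hsucc 0, hsucc 1]
    linear_combination hP₀₂ + ha₀P₁ + ha₀P₂
  · rw [hsucc, hsucc, hsucc]
    exact (hP.add_succ hP_nonneg (noInternalZeros_coeff_taylor_one hB_nonneg)) k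

theorem logConcave_coeff_taylor_one (h0 : ∀ n, 0 ≤ p.coeff n)
    (hlc : LogConcave p.coeff) (hiz : NoInternalZeros p.coeff) :
    LogConcave (taylor 1 p).coeff := by
  induction hd : p.natDegree generalizing p with
  | zero =>
    refine logConcave_coeff_taylor_one_of_divX h0 hlc hiz fun i => ?_
    simp [divX_eq_zero_iff.mpr (eq_C_of_natDegree_eq_zero hd)]
  | succ d ih =>
    refine logConcave_coeff_taylor_one_of_divX h0 hlc hiz (ih
      (fun n => by simpa only [coeff_divX] using h0 (n + 1))
      (fun i => by simpa only [coeff_divX] using hlc (i + 1))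
      (fun i j k hij hjk => by
        simpa only [coeff_divX] using hiz (i + 1) (j + 1) (k + 1) (by omega) (by omega)) ?_)
    rw [natDegree_divX_eq_natDegree_tsub_one, hd, Nat.add_sub_cancel]

end Polynomial

/-- If a polynomial `A` has nonnegative, log-concave coefficients with no internal zeros,
then so does `A(x+1)`. -/
theorem shift_preserves_log_concave (A : Polynomial ℝ)
    (h0 : ∀ i, 0 ≤ A.coeff i)
    (hlc : ∀ i, 1 ≤ i → A.coeff (i - 1) * A.coeff (i + 1) ≤ (A.coeff i) ^ 2)
    (hiz : ∀ i j k, i < j → j < k → A.coeff i ≠ 0 → A.coeff k ≠ 0 → A.coeff j ≠ 0) :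
    (∀ i, 0 ≤ (A.comp (X + 1)).coeff i) ∧
    (∀ i, 1 ≤ i →
      (A.comp (X + 1)).coeff (i - 1) * (A.comp (X + 1)).coeff (i + 1) ≤
        ((A.comp (X + 1)).coeff i) ^ 2) ∧
    (∀ i j k, i < j → j < k → (A.comp (X + 1)).coeff i ≠ 0 →
      (A.comp (X + 1)).coeff k ≠ 0 → (A.comp (X + 1)).coeff j ≠ 0) := by
  rw [← C_1, ← taylor_apply]
  exact ⟨coeff_taylor_one_nonneg h0,
    logConcave_iff.mp (logConcave_coeff_taylor_one h0 (logConcave_iff.mpr hlc) hiz),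
    noInternalZeros_coeff_taylor_one h0⟩
end
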